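/- arXiv:2207.00024 — 2 statements merged into one kernel-verified Lean document; each statement's English description precedes it below -/
import Mathlib

section
/- Every trace-zero matrix over ℂ is a commutator: if a ∈ M_n(ℂ) with tr(a) = 0, then there exist b, c ∈ M_n(ℂ) with a = bc − cb. -/
/-!
A trace-zero endomorphism `f` has zero diagonal in a suitable basis. If `f` is a homothety it is
zero (characteristic zero). Otherwise pick `v` with `v, f v` independent and a functional `φ`
with `φ v = 1`, `φ (f v) = 0`; in a basis `v, w₁, …, wₘ` with `wᵢ ∈ ker φ` the first diagonal
entry is `φ (f v) = 0` and the rest is the diagonal of the compression of `f` to `ker φ`, which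
again has trace zero, so induction applies. A zero-diagonal matrix `A` is the commutator
`D X - X D` with `D = diagonal d` for distinct `dᵢ` and `Xᵢⱼ = Aᵢⱼ / (dᵢ - dⱼ)`.
-/

open Matrix Module

theorem LinearMap.trace_eq_sum_repr {R M ι : Type*} [CommRing R] [AddCommGroup M] [Module R M]
    [Fintype ι] [DecidableEq ι] (b : Basis ι R M) (f : Module.End R M) :
    LinearMap.trace R M f = ∑ i, b.repr (f (b i)) i := by
  simp [LinearMap.trace_eq_matrix_trace R b, Matrix.trace, LinearMap.toMatrix_apply]

namespace Module.Dual

variable {R M : Type*} [CommRing R] [AddCommGroup M] [Module R M]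
variable (φ : Dual R M) {v : M} (hv : φ v = 1)

/-- The splitting `z = φ z • v + (z - φ z • v)`. -/
def prodKerEquiv : M ≃ₗ[R] R × LinearMap.ker φ :=
  .ofLinearMap
    (φ.prod ((LinearMap.id - φ.smulRight v).codRestrict _ fun z => by simp [hv]))
    ((LinearMap.toSpanSingleton R M v).coprod (LinearMap.ker φ).subtype)
    (by ext <;> simp [hv]) (by ext; simp)

def compressKer (f : Module.End R M) : Module.End R (LinearMap.ker φ) :=
  LinearMap.snd R R _ ∘ₗ (φ.prodKerEquiv hv).toLinearMap ∘ₗ f ∘ₗ (LinearMap.ker φ).subtype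

noncomputable def basisSumKer {ι : Type*} (b : Basis ι R (LinearMap.ker φ)) :
    Basis (Unit ⊕ ι) R M :=
  ((Basis.singleton Unit R).prod b).map (φ.prodKerEquiv hv).symm

variable {ι : Type*} (b : Basis ι R (LinearMap.ker φ)) (f : Module.End R M)

theorem basisSumKer_repr_inl :
    (φ.basisSumKer hv b).repr (f (φ.basisSumKer hv b (.inl ()))) (.inl ()) = φ (f v) := by
  simp [basisSumKer, prodKerEquiv, Basis.prod_repr_inl]

theorem basisSumKer_repr_inr (i : ι) :
    (φ.basisSumKer hv b).repr (f (φ.basisSumKer hv b (.inr i))) (.inr i) =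
      b.repr (φ.compressKer hv f (b i)) i := by
  simp [basisSumKer, prodKerEquiv, compressKer, Basis.prod_repr_inr]

end Module.Dual

section Field

variable {K V : Type*} [Field K] [AddCommGroup V] [Module K V]

theorem LinearIndependent.exists_dual_apply_eq_one_apply_eq_zero {v w : V}
    (h : LinearIndependent K ![v, w]) : ∃ φ : Dual K V, φ v = 1 ∧ φ w = 0 := by
  rw [linearIndependent_fin2] at h
  have hv : v ∉ K ∙ w := by
    rw [Submodule.mem_span_singleton]
    rintro ⟨a, ha⟩
    exact h.2 a (by simpa using ha)
  obtain ⟨φ, hφv, hφw⟩ := Submodule.exists_dual_map_eq_bot_of_notMem hv inferInstance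
  have hφw : φ w = 0 := by simpa [Submodule.map_span] using hφw
  exact ⟨(φ v)⁻¹ • φ, inv_mul_cancel₀ hφv, by simp [hφw]⟩

theorem Module.Dual.trace_eq_apply_add_trace_compressKer [FiniteDimensional K V]
    (φ : Dual K V) {v : V} (hv : φ v = 1) (f : Module.End K V) :
    LinearMap.trace K V f = φ (f v) + LinearMap.trace K _ (φ.compressKer hv f) := by
  classical
  let b := finBasis K (LinearMap.ker φ)
  rw [LinearMap.trace_eq_sum_repr (φ.basisSumKer hv b), LinearMap.trace_eq_sum_repr b,
    Fintype.sum_sum_type]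
  simp [Module.Dual.basisSumKer_repr_inl, Module.Dual.basisSumKer_repr_inr]

theorem Module.End.exists_basis_repr_apply_self_eq_zero [CharZero K] [FiniteDimensional K V]
    (f : Module.End K V) (hf : LinearMap.trace K V f = 0) :
    ∃ b : Basis (Fin (finrank K V)) K V, ∀ i, b.repr (f (b i)) i = 0 := by
  induction h : finrank K V generalizing V with
  | zero => exact ⟨h ▸ finBasis K V, fun i => i.elim0⟩
  | succ n ih =>
    by_cases hscalar : ∀ v, ¬ LinearIndependent K ![v, f v]
    · obtain ⟨c, rfl⟩ := LinearMap.exists_eq_smul_id_of_forall_notLinearIndependent hscalar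
      have hc : c = 0 := by simpa [h, Nat.cast_add_one_ne_zero] using hf
      exact ⟨h ▸ finBasis K V, by simp [hc]⟩
    push Not at hscalar
    obtain ⟨v, hv⟩ := hscalar
    obtain ⟨φ, hφv, hφfv⟩ := hv.exists_dual_apply_eq_one_apply_eq_zero
    have hker : finrank K (LinearMap.ker φ) = n := by
      have := (φ.prodKerEquiv hφv).finrank_eq
      rw [h, finrank_prod, finrank_self] at this
      omega
    have htrace : LinearMap.trace K _ (φ.compressKer hφv f) = 0 := by
      simpa [hφfv, hf] using (φ.trace_eq_apply_add_trace_compressKer hφv f).symm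
    obtain ⟨bW, hbW⟩ := ih (φ.compressKer hφv f) htrace hker
    let b := φ.basisSumKer hφv bW
    have hb : ∀ j, b.repr (f (b j)) j = 0 := by
      rintro (_ | j)
      · rw [φ.basisSumKer_repr_inl, hφfv]
      · rw [φ.basisSumKer_repr_inr, hbW]
    refine ⟨b.reindex (b.indexEquiv (h ▸ finBasis K V)), fun i => ?_⟩
    rw [Basis.reindex_apply, Basis.repr_reindex_apply]
    exact hb _

theorem Matrix.exists_eq_diagonal_mul_sub_mul_diagonal {ι : Type*} [Fintype ι] [DecidableEq ι]
    {d : ι → K} (hd : Function.Injective d) {A : Matrix ι ι K} (hA : ∀ i, A i i = 0) :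
    ∃ X : Matrix ι ι K, A = diagonal d * X - X * diagonal d := by
  refine ⟨of fun i j => A i j / (d i - d j), ?_⟩
  ext i j
  rw [sub_apply, diagonal_mul, mul_diagonal, of_apply]
  by_cases hij : i = j
  · simp [hij, hA]
  · have : d i - d j ≠ 0 := sub_ne_zero.mpr (hd.ne hij)
    field_simp

theorem Module.End.exists_eq_mul_sub_mul_of_trace_eq_zero [CharZero K] [FiniteDimensional K V]
    (f : Module.End K V) (hf : LinearMap.trace K V f = 0) :
    ∃ g h : Module.End K V, f = g * h - h * g := by
  obtain ⟨b, hb⟩ := f.exists_basis_repr_apply_self_eq_zero hf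
  let d : Fin (finrank K V) → K := fun i => i
  have hd : Function.Injective d := Nat.cast_injective.comp Fin.val_injective
  obtain ⟨X, hX⟩ := Matrix.exists_eq_diagonal_mul_sub_mul_diagonal hd
    (A := LinearMap.toMatrixAlgEquiv b f) fun i => by rw [LinearMap.toMatrixAlgEquiv_apply, hb]
  refine ⟨toLinAlgEquiv b (diagonal d), toLinAlgEquiv b X,
    (LinearMap.toMatrixAlgEquiv b).injective ?_⟩
  simpa using hX

end Field

/-- Shoda's theorem: every trace-zero complex matrix is a commutator. -/
theorem trace_zero_iff_commutator (n : ℕ) (a : Matrix (Fin n) (Fin n) ℂ)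
    (h : a.trace = 0) :
    ∃ b c : Matrix (Fin n) (Fin n) ℂ, a = b * c - c * b := by
  obtain ⟨g, k, hgk⟩ :=
    Module.End.exists_eq_mul_sub_mul_of_trace_eq_zero (toLin' a) (by simpa using h)
  refine ⟨LinearMap.toMatrix' g, LinearMap.toMatrix' k, toLin'.injective ?_⟩
  simpa [Module.End.mul_eq_comp] using hgk
end

section
/- For a completely positive map φ : M_n(ℂ) → M_m(ℂ) of the 'measure-and-prepare' form φ(a) = Σ_k E_k · tr(F_k a) with E_k positive semidefinite and (|ξ_k⟩)_k an orthonormal family with F_k = |ξ_k⟩⟨ξ_k|, the Choi matrix ρ_φ = Σ_{ij} E_{ij} ⊗ φ(E_{ij}) is a separable operator, i.e., a positive linear combination of tensor products of positive semidefinite matrices. -/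
/-!
The Choi matrix is additive in the map, and the Choi matrix of the rank-one map
`a ↦ tr (A a) • B` is `Aᵀ ⊗ B`. Hence `ρ_φ = ∑ₖ (ξₖ ξₖ*)ᵀ ⊗ Eₖ`, and both factors of every
term are positive semidefinite.
-/

open Matrix Finset Kronecker
open scoped ComplexOrder

/-- A bipartite operator is separable if it is a positive linear combination of tensor
(Kronecker) products of positive semidefinite matrices. -/
def SeparableOp {n m : ℕ} (ρ : Matrix (Fin n × Fin m) (Fin n × Fin m) ℂ) : Prop :=
  ∃ (L : ℕ) (p : Fin L → ℝ) (A : Fin L → Matrix (Fin n) (Fin n) ℂ)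
    (B : Fin L → Matrix (Fin m) (Fin m) ℂ),
    (∀ l, 0 ≤ p l) ∧ (∀ l, (A l).PosSemidef) ∧ (∀ l, (B l).PosSemidef) ∧
    ρ = ∑ l, ((p l : ℂ) • (A l ⊗ₖ B l))

namespace Matrix

theorem kronecker_sum {l m p q α R : Type*} [NonUnitalNonAssocSemiring R] (A : Matrix l m R)
    (s : Finset α) (B : α → Matrix p q R) : A ⊗ₖ ∑ k ∈ s, B k = ∑ k ∈ s, A ⊗ₖ B k := by
  ext ⟨i, a⟩ ⟨j, b⟩
  simp only [kroneckerMap_apply, sum_apply, Finset.mul_sum]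

theorem sum_kronecker {l m p q α R : Type*} [NonUnitalNonAssocSemiring R] (s : Finset α)
    (A : α → Matrix l m R) (B : Matrix p q R) :
    (∑ k ∈ s, A k) ⊗ₖ B = ∑ k ∈ s, A k ⊗ₖ B := by
  ext ⟨i, a⟩ ⟨j, b⟩
  simp only [kroneckerMap_apply, sum_apply, Finset.sum_mul]

variable {ι κ α R : Type*} [Fintype ι] [DecidableEq ι] [CommSemiring R]

def choiMatrix (φ : Matrix ι ι R → Matrix κ κ R) : Matrix (ι × κ) (ι × κ) R :=
  ∑ i, ∑ j, single i j 1 ⊗ₖ φ (single i j 1)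

theorem choiMatrix_sum (s : Finset α) (φ : α → Matrix ι ι R → Matrix κ κ R) :
    choiMatrix (fun a => ∑ k ∈ s, φ k a) = ∑ k ∈ s, choiMatrix (φ k) := by
  simp only [choiMatrix, kronecker_sum]
  exact (Finset.sum_congr rfl fun _ _ => Finset.sum_comm).trans Finset.sum_comm

theorem choiMatrix_trace_mul_smul (A : Matrix ι ι R) (B : Matrix κ κ R) :
    choiMatrix (fun a => trace (A * a) • B) = Aᵀ ⊗ₖ B := by
  simp only [choiMatrix, trace_mul_single, MulOpposite.op_one, one_smul, kronecker_smul,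
    ← smul_kronecker, smul_single, smul_eq_mul, mul_one]
  rw [matrix_eq_sum_single Aᵀ]
  simp only [sum_kronecker, transpose_apply]

end Matrix

theorem separableOp_sum_kronecker {n m K : ℕ} {A : Fin K → Matrix (Fin n) (Fin n) ℂ}
    {B : Fin K → Matrix (Fin m) (Fin m) ℂ} (hA : ∀ k, (A k).PosSemidef)
    (hB : ∀ k, (B k).PosSemidef) : SeparableOp (∑ k, A k ⊗ₖ B k) :=
  ⟨K, fun _ => 1, A, B, fun _ => zero_le_one, hA, hB, by simp⟩

theorem choi_of_measure_prepare_separable_general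
    (n m K : ℕ)
    (E : Fin K → Matrix (Fin m) (Fin m) ℂ) (hE : ∀ k, (E k).PosSemidef)
    (ξ : Fin K → (Fin n → ℂ))
    (φ : Matrix (Fin n) (Fin n) ℂ → Matrix (Fin m) (Fin m) ℂ)
    (hφ : ∀ a, φ a =
      ∑ k, (Matrix.trace (Matrix.vecMulVec (ξ k) (star (ξ k)) * a)) • E k) :
    SeparableOp (∑ i, ∑ j,
      (Matrix.single i j (1 : ℂ)) ⊗ₖ φ (Matrix.single i j (1 : ℂ))) := by
  change SeparableOp (choiMatrix φ)
  rw [funext hφ, choiMatrix_sum]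
  simp only [choiMatrix_trace_mul_smul]
  exact separableOp_sum_kronecker (fun k => (posSemidef_vecMulVec_self_star _).transpose) hE

/-- The Choi matrix of a measure-and-prepare channel
`φ(a) = ∑ₖ Eₖ · tr(Fₖ a)`, with `Eₖ ⪰ 0` and `Fₖ = |ξₖ⟩⟨ξₖ|` for an orthonormal
family `(ξₖ)`, is a separable operator. -/
theorem choi_of_measure_prepare_separable
    (n m K : ℕ)
    (E : Fin K → Matrix (Fin m) (Fin m) ℂ) (hE : ∀ k, (E k).PosSemidef)
    (ξ : Fin K → (Fin n → ℂ))
    (hortho : ∀ k l, dotProduct (star (ξ k)) (ξ l) = if k = l then 1 else 0)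
    (φ : Matrix (Fin n) (Fin n) ℂ → Matrix (Fin m) (Fin m) ℂ)
    (hφ : ∀ a, φ a =
      ∑ k, (Matrix.trace (Matrix.vecMulVec (ξ k) (star (ξ k)) * a)) • E k) :
    SeparableOp (∑ i, ∑ j,
      (Matrix.single i j (1 : ℂ)) ⊗ₖ φ (Matrix.single i j (1 : ℂ))) :=
  choi_of_measure_prepare_separable_general n m K E hE ξ φ hφ
end
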